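/- A binomial B = x^u - x^v ∈ I_A of A-degree b is indispensable if and only if the graph G(b) consists of exactly two connected components, which are the singletons {x^u} and {x^v}. Moreover, in this case b is a minimal binomial A-degree. -/

import Mathlib

open MvPolynomial

noncomputable section

/-- The `A`-degree of a monomial exponent vector `u`. -/
def degA {m n : ℕ} (A : Fin m → Fin n → ℤ) (u : Fin m →₀ ℕ) : Fin n → ℤ :=
  ∑ i, (u i : ℤ) • A i

/-- The affine semigroup `ℕA` is pointed. -/
def IsPointed {m n : ℕ} (A : Fin m → Fin n → ℤ) : Prop :=
  ∀ u v : Fin m →₀ ℕ, degA A u + degA A v = 0 → degA A u = 0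

/-- The toric ideal `I_A`. -/
def toricIdeal (K : Type*) [Field K] {m n : ℕ} (A : Fin m → Fin n → ℤ) :
    Ideal (MvPolynomial (Fin m) K) :=
  Ideal.span {f | ∃ u v : Fin m →₀ ℕ, degA A u = degA A v ∧
    f = monomial u (1 : K) - monomial v 1}

/-- `b` belongs to the affine semigroup `ℕA`. -/
def inNA {m n : ℕ} (A : Fin m → Fin n → ℤ) (b : Fin n → ℤ) : Prop :=
  ∃ u : Fin m →₀ ℕ, degA A u = b

/-- `c` is strictly smaller than `b` in the natural partial order on `ℕA`. -/
def ltA {m n : ℕ} (A : Fin m → Fin n → ℤ) (c b : Fin n → ℤ) : Prop :=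
  (∃ e, inNA A e ∧ b = c + e) ∧ c ≠ b

/-- The ideal `I_{A,b}` generated by binomials of `A`-degree strictly less than `b`. -/
def subIdeal (K : Type*) [Field K] {m n : ℕ} (A : Fin m → Fin n → ℤ) (b : Fin n → ℤ) :
    Ideal (MvPolynomial (Fin m) K) :=
  Ideal.span {f | ∃ u v : Fin m →₀ ℕ, degA A u = degA A v ∧ ltA A (degA A u) b ∧
    f = monomial u (1 : K) - monomial v 1}

/-- The graph `G(b)` on the fiber `deg_A^{-1}(b)`. -/
def fiberGraph (K : Type*) [Field K] {m n : ℕ} (A : Fin m → Fin n → ℤ) (b : Fin n → ℤ) :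
    SimpleGraph {u : Fin m →₀ ℕ // degA A u = b} where
  Adj x y := x ≠ y ∧ monomial x.1 (1 : K) - monomial y.1 1 ∈ subIdeal K A b
  symm := ⟨by
    rintro x y ⟨hne, hmem⟩
    exact ⟨hne.symm, by simpa [neg_sub] using neg_mem hmem⟩⟩
  loopless := ⟨fun x h => h.1 rfl⟩

/-- A set of binomials of `I_A`. -/
def IsBinomialSet (K : Type*) [Field K] {m n : ℕ} (A : Fin m → Fin n → ℤ)
    (S : Set (MvPolynomial (Fin m) K)) : Prop :=
  ∀ f ∈ S, ∃ u v : Fin m →₀ ℕ, degA A u = degA A v ∧ f = monomial u (1 : K) - monomial v 1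

/-- A minimal system of binomial generators of `I_A`. -/
def IsMinimalGenSet (K : Type*) [Field K] {m n : ℕ} (A : Fin m → Fin n → ℤ)
    (S : Set (MvPolynomial (Fin m) K)) : Prop :=
  IsBinomialSet K A S ∧ Ideal.span S = toricIdeal K A ∧
    ∀ T : Set (MvPolynomial (Fin m) K), T ⊂ S → Ideal.span T ≠ toricIdeal K A

/-- `b` is a Betti `A`-degree. -/
def IsBettiDegree (K : Type*) [Field K] {m n : ℕ} (A : Fin m → Fin n → ℤ)
    (b : Fin n → ℤ) : Prop :=
  ∃ S, IsMinimalGenSet K A S ∧ ∃ u v : Fin m →₀ ℕ, degA A u = b ∧ degA A v = b ∧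
    monomial u (1 : K) - monomial v 1 ∈ S

/-- `b` is the `A`-degree of a nonzero binomial of `I_A`. -/
def IsBinomialDegree {m n : ℕ} (A : Fin m → Fin n → ℤ) (b : Fin n → ℤ) : Prop :=
  ∃ u v : Fin m →₀ ℕ, u ≠ v ∧ degA A u = b ∧ degA A v = b

/-- `b` is a minimal binomial `A`-degree. -/
def IsMinimalBinomialDegree {m n : ℕ} (A : Fin m → Fin n → ℤ) (b : Fin n → ℤ) : Prop :=
  IsBinomialDegree A b ∧ ∀ c, IsBinomialDegree A c → ¬ ltA A c b

/-- An indispensable binomial of `I_A`: it belongs, up to sign, to every binomial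
generating set of `I_A`. -/
def IsIndispensableBinomial (K : Type*) [Field K] {m n : ℕ} (A : Fin m → Fin n → ℤ)
    (f : MvPolynomial (Fin m) K) : Prop :=
  f ∈ toricIdeal K A ∧
    ∀ S, IsBinomialSet K A S → Ideal.span S = toricIdeal K A → f ∈ S ∨ -f ∈ S

/-- The number of minimal systems of binomial generators of `I_A`, where the
sign of a binomial does not count (a system is recorded as the set of its
sign-pairs `{f, -f}`). -/
def nuIA (K : Type*) [Field K] {m n : ℕ} (A : Fin m → Fin n → ℤ) : ℕ :=
  Set.ncard {U : Set (Set (MvPolynomial (Fin m) K)) |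
    ∃ S, IsMinimalGenSet K A S ∧ U = (fun f => ({f, -f} : Set (MvPolynomial (Fin m) K))) '' S}

/-- The number of elements of `A`-degree `b` in the generating set `S`. -/
def betti0 (K : Type*) [Field K] {m n : ℕ} (A : Fin m → Fin n → ℤ)
    (S : Set (MvPolynomial (Fin m) K)) (b : Fin n → ℤ) : ℕ :=
  Set.ncard {f ∈ S | ∃ u v : Fin m →₀ ℕ, degA A u = b ∧ degA A v = b ∧
    f = monomial u (1 : K) - monomial v 1}

/-- The set of exponents of monomials of the monomial ideal `M_A`. -/
def MAset {m n : ℕ} (A : Fin m → Fin n → ℤ) : Set (Fin m →₀ ℕ) :=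
  {u | ∃ v : Fin m →₀ ℕ, v ≠ u ∧ degA A v = degA A u}

/-- The minimal monomial generating set `T_A` of `M_A` (monomials of `M_A`
minimal under divisibility). -/
def TA {m n : ℕ} (A : Fin m → Fin n → ℤ) : Set (Fin m →₀ ℕ) :=
  {u ∈ MAset A | ∀ w ∈ MAset A, (∀ i, w i ≤ u i) → w = u}


/-!
Indispensability of `f = x^u - x^v` says that `f` is not in the ideal spanned by the other
binomials of `I_A`. A third monomial `x^w` of degree `b` writes `f = (x^u - x^w) + (x^w - x^v)`,
and `f ∈ I_{A,b}` expresses `f` through binomials of smaller degree. Conversely, in a combination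
`f = ∑ cₛ s` only the degree-`b` component matters, and `(cₛ s)_b = (cₛ)_{b - deg s} s` vanishes
unless `deg s ≤ b`: binomials of degree `b` are `0` or `±f` when the fiber is `{u, v}`, and
the others lie in `I_{A,b}`. Finally, a binomial `x^p - x^q` of degree `c < b` yields
`x^(p+a) - x^(q+a) ∈ I_{A,b}` in the fiber of `b`, which is then `±f`.
-/

theorem MvPolynomial.weightedHomogeneousComponent_mul_of_isWeightedHomogeneous
    {σ R M : Type*} [CommSemiring R] [AddCommGroup M] {w : σ → M} {s : MvPolynomial σ R}
    {d : M} (hs : IsWeightedHomogeneous w s d) (c : MvPolynomial σ R) (b : M) :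
    weightedHomogeneousComponent w b (c * s) = weightedHomogeneousComponent w (b - d) c * s := by
  classical
  let := weightedGradedAlgebra R w
  have h := DirectSum.coe_decompose_mul_add_of_right_mem (weightedHomogeneousSubmodule R w)
    (i := b - d) (a := c) hs
  rw [sub_add_cancel] at h
  simpa only [DirectSum.decompose, Equiv.coe_fn_mk, weightedDecomposition.decompose'_apply] using h

section

variable {K : Type*} [Field K] {m n : ℕ} (A : Fin m → Fin n → ℤ)

theorem degA_eq_weight (u : Fin m →₀ ℕ) : degA A u = Finsupp.weight A u := by
  simp [degA, Finsupp.weight_eq_sum]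

theorem degA_add (u v : Fin m →₀ ℕ) : degA A (u + v) = degA A u + degA A v := by
  simp only [degA_eq_weight, map_add]

theorem monomial_sub_monomial_ne_zero {u v : Fin m →₀ ℕ} (hne : u ≠ v) :
    monomial u (1 : K) - monomial v 1 ≠ 0 :=
  sub_ne_zero.mpr fun h => hne ((monomial_left_inj one_ne_zero).mp h)

theorem isWeightedHomogeneous_monomial_sub_monomial {p q : Fin m →₀ ℕ}
    (hpq : degA A p = degA A q) :
    IsWeightedHomogeneous A (monomial p (1 : K) - monomial q 1) (degA A p) :=
  (isWeightedHomogeneous_monomial _ _ _ (degA_eq_weight A p).symm).sub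
    (isWeightedHomogeneous_monomial _ _ _ (by rw [hpq, degA_eq_weight]))

theorem inNA_of_weightedHomogeneousComponent_ne_zero {c : MvPolynomial (Fin m) K}
    {e : Fin n → ℤ} (h : weightedHomogeneousComponent A e c ≠ 0) : inNA A e := by
  classical
  obtain ⟨w, hw⟩ := ne_zero_iff.mp h
  rw [coeff_weightedHomogeneousComponent] at hw
  exact ⟨w, by rw [degA_eq_weight]; by_contra hwe; simp [hwe] at hw⟩

theorem monomial_add_sub_monomial_add_mem_subIdeal {p q : Fin m →₀ ℕ} {b : Fin n → ℤ}
    (hpq : degA A p = degA A q) (hlt : ltA A (degA A p) b) (a : Fin m →₀ ℕ) :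
    monomial (p + a) (1 : K) - monomial (q + a) 1 ∈ subIdeal K A b := by
  have h : monomial (p + a) (1 : K) - monomial (q + a) 1 =
      monomial a 1 * (monomial p 1 - monomial q 1) := by
    rw [mul_sub, monomial_mul, monomial_mul, one_mul, add_comm a, add_comm a]
  rw [h]
  exact Ideal.mul_mem_left _ _ (Ideal.subset_span ⟨p, q, hpq, hlt, rfl⟩)

theorem fiberGraph_adj_mk_iff {u v : Fin m →₀ ℕ} {b : Fin n → ℤ} (hne : u ≠ v)
    (hu : degA A u = b) (hv : degA A v = b) :
    (fiberGraph K A b).Adj ⟨u, hu⟩ ⟨v, hv⟩ ↔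
      monomial u (1 : K) - monomial v 1 ∈ subIdeal K A b :=
  and_iff_right (Subtype.mk_eq_mk.not.mpr hne)

variable (K) in
def toricBinomials : Set (MvPolynomial (Fin m) K) :=
  {f | ∃ u v : Fin m →₀ ℕ, degA A u = degA A v ∧ f = monomial u (1 : K) - monomial v 1}

variable (K) in
def toricBinomialsExcept (f : MvPolynomial (Fin m) K) : Set (MvPolynomial (Fin m) K) :=
  toricBinomials K A \ {f, -f}

theorem isIndispensableBinomial_iff {f : MvPolynomial (Fin m) K} (hf : f ∈ toricIdeal K A) :
    IsIndispensableBinomial K A f ↔ f ∉ Ideal.span (toricBinomialsExcept K A f) := by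
  constructor
  · intro hind hmem
    have hspan : Ideal.span (toricBinomialsExcept K A f) = toricIdeal K A := by
      refine le_antisymm (Ideal.span_mono Set.sdiff_subset) (Ideal.span_le.2 fun g hg => ?_)
      by_cases hgf : g ∈ ({f, -f} : Set _)
      · rcases hgf with rfl | rfl
        exacts [hmem, neg_mem hmem]
      · exact Ideal.subset_span ⟨hg, hgf⟩
    rcases hind.2 _ (fun g hg => hg.1) hspan with h | h
    exacts [h.2 (Or.inl rfl), h.2 (Or.inr rfl)]
  · intro hnot
    refine ⟨hf, fun S hS hspan => ?_⟩
    by_contra! hfS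
    have hsub : S ⊆ toricBinomialsExcept K A f := fun g hg =>
      ⟨hS g hg, by rintro (rfl | rfl); exacts [hfS.1 hg, hfS.2 hg]⟩
    exact hnot (Ideal.span_mono hsub (hspan ▸ hf))

theorem mem_subIdeal_sup_span_of_mem_span {S : Set (MvPolynomial (Fin m) K)}
    (hS : IsBinomialSet K A S) {f : MvPolynomial (Fin m) K} {b : Fin n → ℤ}
    (hfb : IsWeightedHomogeneous A f b) (hf : f ∈ Ideal.span S) :
    f ∈ subIdeal K A b ⊔ Ideal.span {s ∈ S | ∃ p q : Fin m →₀ ℕ, degA A p = b ∧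
      degA A q = b ∧ s = monomial p (1 : K) - monomial q 1} := by
  obtain ⟨c, hcS, rfl⟩ := Submodule.mem_span_set.mp hf
  rw [← hfb.weightedHomogeneousComponent_same, Finsupp.sum, map_sum]
  refine Ideal.sum_mem _ fun s hs => ?_
  obtain ⟨p, q, hpq, rfl⟩ := hS _ (hcS hs)
  rw [smul_eq_mul, weightedHomogeneousComponent_mul_of_isWeightedHomogeneous
    (isWeightedHomogeneous_monomial_sub_monomial A hpq)]
  by_cases hpb : degA A p = b
  · exact Ideal.mem_sup_right (Ideal.mul_mem_left _ _
      (Ideal.subset_span ⟨hcS hs, p, q, hpb, hpq ▸ hpb, rfl⟩))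
  by_cases hc :
      weightedHomogeneousComponent A (b - degA A p) (c (monomial p 1 - monomial q 1)) = 0
  · rw [hc, zero_mul]
    exact zero_mem _
  have hlt : ltA A (degA A p) b :=
    ⟨⟨_, inNA_of_weightedHomogeneousComponent_ne_zero A hc, (add_sub_cancel _ _).symm⟩, hpb⟩
  exact Ideal.mem_sup_left (Ideal.mul_mem_left _ _ (Ideal.subset_span ⟨p, q, hpq, hlt, rfl⟩))

theorem eq_or_eq_of_notMem_span_toricBinomialsExcept {u v w : Fin m →₀ ℕ} {b : Fin n → ℤ}
    (hu : degA A u = b) (hv : degA A v = b) (hw : degA A w = b)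
    (h : monomial u (1 : K) - monomial v 1 ∉
      Ideal.span (toricBinomialsExcept K A (monomial u 1 - monomial v 1))) :
    w = u ∨ w = v := by
  by_contra! hw'
  have hcoeff : ∀ g ∈ ({monomial u (1 : K) - monomial v 1, -(monomial u 1 - monomial v 1)} :
      Set _), coeff w g = 0 := by
    rintro g (rfl | rfl) <;> simp [coeff_monomial, hw'.1.symm, hw'.2.symm]
  have hleft : monomial u (1 : K) - monomial w 1 ∈
      toricBinomialsExcept K A (monomial u 1 - monomial v 1) :=
    ⟨⟨u, w, hu.trans hw.symm, rfl⟩, fun hg => by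
      simpa [coeff_monomial, hw'.1.symm] using hcoeff _ hg⟩
  have hright : monomial w (1 : K) - monomial v 1 ∈
      toricBinomialsExcept K A (monomial u 1 - monomial v 1) :=
    ⟨⟨w, v, hw.trans hv.symm, rfl⟩, fun hg => by
      simpa [coeff_monomial, hw'.2.symm] using hcoeff _ hg⟩
  have hsum := add_mem (Ideal.subset_span hleft) (Ideal.subset_span hright)
  rw [sub_add_sub_cancel] at hsum
  exact h hsum

theorem subIdeal_le_span_toricBinomialsExcept {u v : Fin m →₀ ℕ} {b : Fin n → ℤ}
    (hne : u ≠ v) (hu : degA A u = b) (hv : degA A v = b) :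
    subIdeal K A b ≤ Ideal.span (toricBinomialsExcept K A (monomial u 1 - monomial v 1)) := by
  have hf : IsWeightedHomogeneous A (monomial u (1 : K) - monomial v 1) b :=
    hu ▸ isWeightedHomogeneous_monomial_sub_monomial A (hu.trans hv.symm)
  refine Ideal.span_le.2 ?_
  rintro g ⟨p, q, hpq, hlt, rfl⟩
  refine Ideal.subset_span ⟨⟨p, q, hpq, rfl⟩, fun hg => hlt.2 ?_⟩
  have hg : IsWeightedHomogeneous A (monomial p (1 : K) - monomial q 1) b ∧
      monomial p (1 : K) - monomial q 1 ≠ 0 := by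
    rcases hg with hg | hg <;> rw [hg]
    exacts [⟨hf, monomial_sub_monomial_ne_zero hne⟩,
      ⟨hf.neg, neg_ne_zero.mpr (monomial_sub_monomial_ne_zero hne)⟩]
  exact (isWeightedHomogeneous_monomial_sub_monomial A hpq).inj_right hg.2 hg.1

theorem mem_subIdeal_of_mem_span_toricBinomialsExcept {u v : Fin m →₀ ℕ} {b : Fin n → ℤ}
    (hu : degA A u = b) (hv : degA A v = b) (hfib : ∀ w, degA A w = b → w = u ∨ w = v)
    (h : monomial u (1 : K) - monomial v 1 ∈
      Ideal.span (toricBinomialsExcept K A (monomial u 1 - monomial v 1))) :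
    monomial u (1 : K) - monomial v 1 ∈ subIdeal K A b := by
  have hf : IsWeightedHomogeneous A (monomial u (1 : K) - monomial v 1) b :=
    hu ▸ isWeightedHomogeneous_monomial_sub_monomial A (hu.trans hv.symm)
  have hsup := mem_subIdeal_sup_span_of_mem_span A (fun g hg => hg.1) hf h
  suffices hbot : Ideal.span {s ∈ toricBinomialsExcept K A (monomial u 1 - monomial v 1) |
      ∃ p q : Fin m →₀ ℕ, degA A p = b ∧ degA A q = b ∧
        s = monomial p (1 : K) - monomial q 1} = ⊥ by
    rwa [hbot, sup_bot_eq] at hsup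
  rw [Ideal.span_eq_bot]
  rintro s ⟨⟨-, hs⟩, p, q, hp, hq, rfl⟩
  rcases hfib p hp with rfl | rfl <;> rcases hfib q hq with rfl | rfl
  · exact sub_self _
  · exact absurd (Or.inl rfl) hs
  · exact absurd (Or.inr (neg_sub _ _).symm) hs
  · exact sub_self _

theorem isMinimalBinomialDegree_of_forall_eq_or_eq {u v : Fin m →₀ ℕ} {b : Fin n → ℤ}
    (hne : u ≠ v) (hu : degA A u = b) (hv : degA A v = b)
    (hfib : ∀ w, degA A w = b → w = u ∨ w = v)
    (hnot : monomial u (1 : K) - monomial v 1 ∉ subIdeal K A b) :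
    IsMinimalBinomialDegree A b := by
  refine ⟨⟨u, v, hne, hu, hv⟩, ?_⟩
  rintro _ ⟨p, q, hpq, rfl, hq⟩ hlt
  obtain ⟨_, ⟨a, rfl⟩, hb⟩ := hlt.1
  have hmem := monomial_add_sub_monomial_add_mem_subIdeal (K := K) A hq.symm hlt a
  have hpa : degA A (p + a) = b := by rw [degA_add, hb]
  have hqa : degA A (q + a) = b := by rw [degA_add, hq, hb]
  rcases hfib _ hpa with hpu | hpv <;> rcases hfib _ hqa with hqu | hqv
  · exact hpq (add_right_cancel (hpu.trans hqu.symm))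
  · exact hnot (hpu ▸ hqv ▸ hmem)
  · exact hnot (by simpa [hpv, hqu] using neg_mem hmem)
  · exact hpq (add_right_cancel (hpv.trans hqv.symm))

end

theorem statement10_general {K : Type*} [Field K] {m n : ℕ} (A : Fin m → Fin n → ℤ)
    (b : Fin n → ℤ) (u v : Fin m →₀ ℕ) (hne : u ≠ v)
    (hu : degA A u = b) (hv : degA A v = b) :
    (IsIndispensableBinomial K A (monomial u (1 : K) - monomial v 1) ↔
      ((∀ w : Fin m →₀ ℕ, degA A w = b → w = u ∨ w = v) ∧
        ¬ (fiberGraph K A b).Adj ⟨u, hu⟩ ⟨v, hv⟩)) ∧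
    (IsIndispensableBinomial K A (monomial u (1 : K) - monomial v 1) →
      IsMinimalBinomialDegree A b) := by
  have hf : monomial u (1 : K) - monomial v 1 ∈ toricIdeal K A :=
    Ideal.subset_span ⟨u, v, hu.trans hv.symm, rfl⟩
  have hiff : IsIndispensableBinomial K A (monomial u (1 : K) - monomial v 1) ↔
      (∀ w : Fin m →₀ ℕ, degA A w = b → w = u ∨ w = v) ∧
        monomial u (1 : K) - monomial v 1 ∉ subIdeal K A b := by
    rw [isIndispensableBinomial_iff A hf]
    exact ⟨fun h => ⟨fun w hw => eq_or_eq_of_notMem_span_toricBinomialsExcept A hu hv hw h,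
        fun hsub => h (subIdeal_le_span_toricBinomialsExcept A hne hu hv hsub)⟩,
      fun ⟨hfib, hnot⟩ h =>
        hnot (mem_subIdeal_of_mem_span_toricBinomialsExcept A hu hv hfib h)⟩
  rw [fiberGraph_adj_mk_iff A hne, hiff]
  exact ⟨Iff.rfl, fun ⟨hfib, hnot⟩ =>
    isMinimalBinomialDegree_of_forall_eq_or_eq A hne hu hv hfib hnot⟩

/-- A binomial `x^u - x^v` of `A`-degree `b` is indispensable if and only if
`G(b)` consists of exactly the two singleton components `{x^u}` and `{x^v}`;
moreover in that case `b` is a minimal binomial `A`-degree. -/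
theorem statement10 {K : Type*} [Field K] {m n : ℕ} (A : Fin m → Fin n → ℤ)
    (hA : IsPointed A) (b : Fin n → ℤ) (u v : Fin m →₀ ℕ) (hne : u ≠ v)
    (hu : degA A u = b) (hv : degA A v = b) :
    (IsIndispensableBinomial K A (monomial u (1 : K) - monomial v 1) ↔
      ((∀ w : Fin m →₀ ℕ, degA A w = b → w = u ∨ w = v) ∧
        ¬ (fiberGraph K A b).Adj ⟨u, hu⟩ ⟨v, hv⟩)) ∧
    (IsIndispensableBinomial K A (monomial u (1 : K) - monomial v 1) →
      IsMinimalBinomialDegree A b) :=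
  statement10_general A b u v hne hu hv
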